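/- arXiv:1311.5073 — 5 statements merged into one kernel-verified Lean document; each statement's English description precedes it below -/
import Mathlib

section
/- Let H be a finite-dimensional real vector space, B : H × H → ℝ a symmetric bilinear form, λ a real number, n ≥ 1, and F a symmetric 2n-multilinear map H^{2n} → ℝ such that F(η, …, η) = λ · B(η,η)^n for every η ∈ H. If η₁, …, η_{n+1} ∈ H satisfy B(η_i, η_j) = 0 for all 1 ≤ i, j ≤ n+1, then F(η₁, …, η_{n+1}, ξ₁, …, ξ_{n−1}) = 0 for all ξ₁, …, ξ_{n−1} ∈ H. -/
open Finset

lemma neg_one_pow_sub (m k : ℕ) (h : k ≤ m) : ((-1:ℝ))^(m-k) = (-1)^m * (-1)^k := by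
  have h1 : ((-1:ℝ))^(m-k) * (-1)^k = (-1)^m := by
    rw [← pow_add, Nat.sub_add_cancel h]
  have h2 : ((-1:ℝ))^k * (-1)^k = 1 := by
    rw [← pow_add]; exact Even.neg_one_pow ⟨k, rfl⟩
  calc ((-1:ℝ))^(m-k) = ((-1:ℝ))^(m-k) * ((-1)^k * (-1)^k) := by rw [h2, mul_one]
    _ = (((-1:ℝ))^(m-k) * (-1)^k) * (-1)^k := by ring
    _ = (-1)^m * (-1)^k := by rw [h1]

lemma lemL (m : ℕ) (R : Finset (Fin m)) :
    ∑ S ∈ (Finset.univ : Finset (Fin m)).powerset.filter (fun S => R ⊆ S),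
      (-1:ℝ)^(m - S.card) = if R = Finset.univ then 1 else 0 := by
  have hbij : ∑ S ∈ (Finset.univ : Finset (Fin m)).powerset.filter (fun S => R ⊆ S),
      (-1:ℝ)^(m - S.card) = ∑ T ∈ Rᶜ.powerset, (-1:ℝ)^(m - (R ∪ T).card) := by
    refine Finset.sum_nbij' (fun S => S \ R) (fun T => R ∪ T) ?_ ?_ ?_ ?_ ?_
    · intro S hS
      simp only [mem_filter, mem_powerset] at hS ⊢
      intro a ha
      simp only [mem_sdiff] at ha
      simp [ha.2]
    · intro T hT
      simp only [mem_powerset] at hT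
      simp only [mem_filter, mem_powerset]
      exact ⟨subset_univ _, subset_union_left⟩
    · intro S hS
      simp only [mem_filter, mem_powerset] at hS
      exact Finset.union_sdiff_of_subset hS.2
    · intro T hT
      simp only [mem_powerset] at hT
      apply Finset.union_sdiff_cancel_left
      exact Finset.disjoint_left.mpr (fun a ha h2 => by
        have := hT h2; simp only [mem_compl] at this; exact this ha)
    · intro S hS
      simp only [mem_filter, mem_powerset] at hS
      rw [Finset.union_sdiff_of_subset hS.2]
  rw [hbij]
  have hcard : ∀ T ∈ Rᶜ.powerset, (R ∪ T).card = R.card + T.card := by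
    intro T hT
    simp only [mem_powerset] at hT
    rw [Finset.card_union_of_disjoint]
    exact Finset.disjoint_left.mpr (fun a ha h2 => by
      have := hT h2; simp only [mem_compl] at this; exact this ha)
  calc ∑ T ∈ Rᶜ.powerset, (-1:ℝ)^(m - (R ∪ T).card)
      = ∑ T ∈ Rᶜ.powerset, (-1:ℝ)^m * (-1)^R.card * (-1)^T.card := by
        refine Finset.sum_congr rfl fun T hT => ?_
        rw [hcard T hT, neg_one_pow_sub m _ (by
          have := Finset.card_le_card ((Finset.union_subset (subset_univ R) (subset_univ T)))
          rw [← hcard T hT]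
          simpa using this), pow_add, mul_assoc]
    _ = (-1:ℝ)^m * (-1)^R.card * ∑ T ∈ Rᶜ.powerset, ((-1:ℝ))^T.card := by
        rw [Finset.mul_sum]
    _ = if R = Finset.univ then 1 else 0 := by
        have : (∑ T ∈ Rᶜ.powerset, ((-1:ℝ))^T.card) = if Rᶜ = ∅ then 1 else 0 := by
          have := Finset.sum_powerset_neg_one_pow_card (x := Rᶜ)
          have h2 := congrArg (fun z : ℤ => (z : ℝ)) this
          push_cast at h2
          convert h2 using 2 <;> simp
        rw [this]
        by_cases h : R = Finset.univ
        · simp [h, ← pow_add]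
        · have : Rᶜ ≠ ∅ := by
            simp only [ne_eq, Finset.compl_eq_empty_iff]; exact h
          simp [h, this]

lemma keySwap (m : ℕ) {α : Type*} [Fintype α] [DecidableEq α]
    (R : α → Finset (Fin m)) (g : α → ℝ) :
    ∑ S ∈ (Finset.univ : Finset (Fin m)).powerset,
        (-1:ℝ)^(m - S.card) * ∑ r ∈ Finset.univ.filter (fun r => R r ⊆ S), g r
      = ∑ r ∈ Finset.univ.filter (fun r => R r = Finset.univ), g r := by
  calc ∑ S ∈ (Finset.univ : Finset (Fin m)).powerset,
        (-1:ℝ)^(m - S.card) * ∑ r ∈ Finset.univ.filter (fun r => R r ⊆ S), g r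
      = ∑ S ∈ (Finset.univ : Finset (Fin m)).powerset, ∑ r ∈ (Finset.univ : Finset α),
          if R r ⊆ S then (-1:ℝ)^(m - S.card) * g r else 0 := by
        refine Finset.sum_congr rfl fun S _ => ?_
        rw [Finset.mul_sum, Finset.sum_filter]
    _ = ∑ r ∈ (Finset.univ : Finset α), ∑ S ∈ (Finset.univ : Finset (Fin m)).powerset,
          if R r ⊆ S then (-1:ℝ)^(m - S.card) * g r else 0 := Finset.sum_comm
    _ = ∑ r ∈ (Finset.univ : Finset α),
          (∑ S ∈ (Finset.univ : Finset (Fin m)).powerset.filter (fun S => R r ⊆ S),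
            (-1:ℝ)^(m - S.card)) * g r := by
        refine Finset.sum_congr rfl fun r _ => ?_
        rw [Finset.sum_mul, ← Finset.sum_filter]
    _ = ∑ r ∈ (Finset.univ : Finset α),
          (if R r = Finset.univ then (1:ℝ) else 0) * g r := by
        refine Finset.sum_congr rfl fun r _ => ?_
        rw [lemL]
    _ = ∑ r ∈ Finset.univ.filter (fun r => R r = Finset.univ), g r := by
        rw [Finset.sum_filter]
        refine Finset.sum_congr rfl fun r _ => ?_
        split <;> simp

/-- multilinear content of Corollary 2.10. Let `H` be a finite-dimensional
real vector space, `B` a symmetric bilinear form, `lam ∈ ℝ`, `n ≥ 1`, and `F` a symmetric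
`2n`-multilinear form with `F(η,…,η) = lam * B(η,η)^n`. If `η₁,…,η_{n+1}` are pairwise
`B`-orthogonal (including `B(ηᵢ,ηᵢ) = 0`), then `F(η₁,…,η_{n+1},ξ₁,…,ξ_{n-1}) = 0` for all
`ξ₁,…,ξ_{n-1}`. -/
theorem fujiki_isotropic_product_vanishes
    (H : Type*) [AddCommGroup H] [Module ℝ H] [FiniteDimensional ℝ H]
    (B : H →ₗ[ℝ] H →ₗ[ℝ] ℝ) (hBsymm : ∀ x y : H, B x y = B y x)
    (lam : ℝ) (n : ℕ) (hn : 1 ≤ n)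
    (F : MultilinearMap ℝ (fun _ : Fin (2 * n) => H) ℝ)
    (hFsymm : ∀ (v : Fin (2 * n) → H) (σ : Equiv.Perm (Fin (2 * n))),
      F (fun i => v (σ i)) = F v)
    (hF : ∀ η : H, F (fun _ => η) = lam * (B η η) ^ n)
    (η : Fin (n + 1) → H) (ξ : Fin (n - 1) → H)
    (hη : ∀ i j, B (η i) (η j) = 0) :
    F (fun i => Fin.append η ξ (Fin.cast (by omega) i)) = 0 := by
  classical
  set w : Fin (2 * n) → H := fun i => Fin.append η ξ (Fin.cast (by omega) i) with hw
  have hwsmall : ∀ (i : Fin (2 * n)) (h : (i : ℕ) < n + 1), w i = η ⟨i, h⟩ := by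
    intro i h
    have hcast : Fin.cast (by omega : 2 * n = (n+1) + (n-1)) i
        = Fin.castAdd (n - 1) ⟨(i : ℕ), h⟩ := by
      apply Fin.ext; rfl
    simp only [hw, hcast, Fin.append_left]
  set P : ℝ := ∑ S ∈ (Finset.univ : Finset (Fin (2 * n))).powerset,
      (-1:ℝ)^(2 * n - S.card) * F (fun _ => ∑ j ∈ S, w j) with hP
  set c : ℕ := ((Finset.univ : Finset (Fin (2*n) → Fin (2*n))).filter
      (fun r => Finset.image r Finset.univ = Finset.univ)).card with hc
  -- Claim A : P = c • F w
  have claimA : P = c • F w := by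
    have step1 : P = ∑ S ∈ (Finset.univ : Finset (Fin (2 * n))).powerset,
        (-1:ℝ)^(2 * n - S.card) * ∑ r ∈ Finset.univ.filter
          (fun r : Fin (2*n) → Fin (2*n) => Finset.image r Finset.univ ⊆ S),
          F (fun i => w (r i)) := by
      refine Finset.sum_congr rfl fun S _ => ?_
      congr 1
      rw [F.map_sum_finset (g := fun _ j => w j) (A := fun _ => S)]
      refine Finset.sum_congr ?_ fun r _ => rfl
      ext r
      simp [Fintype.mem_piFinset, Finset.image_subset_iff]
    rw [step1, keySwap]
    rw [hc, ← Finset.sum_const]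
    refine Finset.sum_congr rfl fun r hr => ?_
    simp only [Finset.mem_filter] at hr
    have hsurj : Function.Surjective r := by
      intro y
      have : y ∈ Finset.image r Finset.univ := by rw [hr.2]; exact Finset.mem_univ y
      obtain ⟨x, _, hx⟩ := Finset.mem_image.mp this
      exact ⟨x, hx⟩
    have hbij : Function.Bijective r := Finite.surjective_iff_bijective.mp hsurj
    have := hFsymm w (Equiv.ofBijective r hbij)
    simpa [Equiv.ofBijective_apply] using this
  -- Claim B : P = 0
  have claimB : P = 0 := by
    have stepB : P = ∑ S ∈ (Finset.univ : Finset (Fin (2 * n))).powerset,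
        (-1:ℝ)^(2 * n - S.card) * ∑ q ∈ Finset.univ.filter
          (fun q : Fin n → Fin (2*n) × Fin (2*n) =>
            (Finset.image (fun k => (q k).1) Finset.univ ∪
             Finset.image (fun k => (q k).2) Finset.univ) ⊆ S),
          (lam * ∏ k : Fin n, B (w (q k).1) (w (q k).2)) := by
      refine Finset.sum_congr rfl fun S _ => ?_
      congr 1
      rw [hF]
      have hBw : B (∑ j ∈ S, w j) (∑ j ∈ S, w j)
          = ∑ p ∈ S ×ˢ S, B (w p.1) (w p.2) := by
        rw [Finset.sum_product, map_sum B w S, LinearMap.sum_apply]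
        exact Finset.sum_congr rfl fun j _ => map_sum (B (w j)) w S
      rw [hBw]
      have hpow : (∑ p ∈ S ×ˢ S, B (w p.1) (w p.2)) ^ n
          = ∑ q ∈ Fintype.piFinset (fun _ : Fin n => S ×ˢ S),
              ∏ k : Fin n, B (w (q k).1) (w (q k).2) := by
        have : ∀ x : ℝ, x ^ n = ∏ _k : Fin n, x := by
          intro x; rw [Finset.prod_const, Finset.card_univ, Fintype.card_fin]
        rw [this, Finset.prod_univ_sum]
      rw [hpow, Finset.mul_sum]
      refine Finset.sum_congr ?_ fun q _ => rfl
      ext q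
      simp only [Fintype.mem_piFinset, Finset.mem_product, Finset.mem_filter,
        Finset.mem_univ, true_and, Finset.union_subset_iff, Finset.image_subset_iff]
      constructor
      · exact fun h => ⟨fun k _ => (h k).1, fun k _ => (h k).2⟩
      · exact fun h k => ⟨h.1 k trivial, h.2 k trivial⟩
    rw [stepB, keySwap]
    refine Finset.sum_eq_zero fun q hq => ?_
    simp only [Finset.mem_filter] at hq
    have hex : ∃ k : Fin n, ((q k).1 : ℕ) < n + 1 ∧ ((q k).2 : ℕ) < n + 1 := by
      by_contra hcon
      have hcon' : ∀ k : Fin n, ¬(((q k).1 : ℕ) < n + 1 ∧ ((q k).2 : ℕ) < n + 1) :=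
        fun k hk => hcon ⟨k, hk⟩
      have hmem : ∀ a : Fin (2*n), ∃ k, (q k).1 = a ∨ (q k).2 = a := by
        intro a
        have : a ∈ Finset.image (fun k => (q k).1) Finset.univ ∪
            Finset.image (fun k => (q k).2) Finset.univ := by
          rw [hq.2]; exact Finset.mem_univ a
        rcases Finset.mem_union.mp this with h | h
        · obtain ⟨k, _, hk⟩ := Finset.mem_image.mp h; exact ⟨k, Or.inl hk⟩
        · obtain ⟨k, _, hk⟩ := Finset.mem_image.mp h; exact ⟨k, Or.inr hk⟩
      choose f hf using hmem
      set A : Finset (Fin (2*n)) := Finset.univ.filter (fun i => (i : ℕ) < n + 1) with hA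
      have hAcard : A.card = n + 1 := by
        have himg : A = Finset.image (Fin.castLE (by omega : n + 1 ≤ 2 * n))
            Finset.univ := by
          ext i
          simp only [hA, Finset.mem_filter, Finset.mem_univ, true_and, Finset.mem_image]
          constructor
          · intro h
            refine ⟨⟨(i : ℕ), h⟩, ?_⟩
            apply Fin.ext; rfl
          · rintro ⟨j, _, rfl⟩; exact j.isLt
        rw [himg, Finset.card_image_of_injective _ (Fin.castLE_injective _)]
        simp
      have hinj : Set.InjOn f A := by
        intro a ha a' ha' hfa
        simp only [hA, Finset.coe_filter, Set.mem_setOf_eq, Finset.mem_univ,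
          true_and] at ha ha'
        rcases hf a with h1 | h1 <;> rcases hf a' with h2 | h2
        · rw [← h1, ← h2, hfa]
        · exfalso
          refine hcon' (f a) ⟨?_, ?_⟩
          · rw [h1]; exact ha
          · rw [hfa, h2]; exact ha'
        · exfalso
          refine hcon' (f a) ⟨?_, ?_⟩
          · rw [hfa, h2]; exact ha'
          · rw [h1]; exact ha
        · rw [← h1, ← h2, hfa]
      have hle := Finset.card_le_card_of_injOn f (fun a _ => Finset.mem_univ (f a)) hinj
      rw [hAcard] at hle
      simp only [Finset.card_univ, Fintype.card_fin] at hle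
      omega
    obtain ⟨k₀, h1, h2⟩ := hex
    have hzero : B (w (q k₀).1) (w (q k₀).2) = 0 := by
      rw [hwsmall _ h1, hwsmall _ h2, hη]
    rw [Finset.prod_eq_zero (Finset.mem_univ k₀) hzero, mul_zero]
  -- conclude
  have hcne : (c : ℝ) ≠ 0 := by
    rw [Nat.cast_ne_zero, hc, Finset.card_ne_zero]
    exact ⟨id, Finset.mem_filter.mpr ⟨Finset.mem_univ _, Finset.image_id⟩⟩
  rw [claimB, nsmul_eq_mul] at claimA
  exact (mul_eq_zero.mp claimA.symm).resolve_left hcne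
end

section
/- Let H be a finite-dimensional real vector space, B : H × H → ℝ a symmetric bilinear form, λ a real number, n ≥ 1, and F a symmetric 2n-multilinear map H^{2n} → ℝ such that F(η, …, η) = λ · B(η,η)^n for every η ∈ H. If η ∈ H satisfies B(η,η) = 0, then for every ξ ∈ H one has F(η, …, η, ξ, …, ξ) (with n copies of η and n copies of ξ) = λ · (2^n (n!)² / (2n)!) · B(η,ξ)^n. In particular, if λ ≠ 0 and B(η,ξ) ≠ 0 then F(η,…,η,ξ,…,ξ) ≠ 0. -/
/-!
Put `v = t • η + ξ`. Multilinearity and symmetry expand `F (v, …, v)` as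
`∑ₖ C(2n, k) tᵏ F(ηᵏ, ξ²ⁿ⁻ᵏ)`, while the Fujiki relation and `B(η, η) = 0` give
`λ (2 t B(η, ξ) + B(ξ, ξ))ⁿ`. Both sides are polynomials in `t`; comparing the coefficients of
`tⁿ` gives `C(2n, n) F(ηⁿ, ξⁿ) = λ 2ⁿ B(η, ξ)ⁿ`.
-/

open Finset

namespace MultilinearMap

variable {R M N ι : Type*} [CommSemiring R] [AddCommMonoid M] [Module R M]
  [AddCommMonoid N] [Module R N]

theorem map_piecewise_const_eq_of_card_eq [Fintype ι] [DecidableEq ι]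
    (F : MultilinearMap R (fun _ : ι => M) N)
    (hF : ∀ (v : ι → M) (σ : Equiv.Perm ι), F (fun i => v (σ i)) = F v)
    {s t : Finset ι} (h : #s = #t) (x y : M) :
    F (s.piecewise (fun _ => x) (fun _ => y)) = F (t.piecewise (fun _ => x) (fun _ => y)) := by
  obtain ⟨σ, hσ⟩ := Equiv.Perm.exists_map_finset_eq s t h
  rw [← hF (t.piecewise (fun _ => x) (fun _ => y)) σ]
  congr 1
  ext i
  have : σ i ∈ t ↔ i ∈ s := by simp [← hσ]
  by_cases hi : i ∈ s <;> simp [Finset.piecewise, hi, this]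

theorem map_piecewise_const_eq_initial_segment {m : ℕ}
    (F : MultilinearMap R (fun _ : Fin m => M) N)
    (hF : ∀ (v : Fin m → M) (σ : Equiv.Perm (Fin m)), F (fun i => v (σ i)) = F v)
    (s : Finset (Fin m)) (x y : M) :
    F (s.piecewise (fun _ => x) (fun _ => y)) = F (fun i => if (i : ℕ) < #s then x else y) := by
  have hcard : #s = #{i : Fin m | (i : ℕ) < #s} := by
    rw [Fin.card_filter_val_lt, min_eq_right (by simpa using card_le_univ s)]
  rw [map_piecewise_const_eq_of_card_eq F hF hcard]
  congr 1
  ext i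
  simp [Finset.piecewise]

theorem map_smul_add_const [Fintype ι] [DecidableEq ι]
    (F : MultilinearMap R (fun _ : ι => M) N) (c : R) (x y : M) :
    F (fun _ => c • x + y) = ∑ s : Finset ι, c ^ #s • F (s.piecewise (fun _ => x) (fun _ => y)) := by
  rw [show (fun _ : ι => c • x + y) = (fun _ => c • x) + (fun _ => y) from rfl, F.map_add_univ]
  refine sum_congr rfl fun s _ => ?_
  rw [← prod_const, ← F.map_piecewise_smul]
  congr 1
  ext i
  by_cases hi : i ∈ s <;> simp [hi]

theorem map_smul_add_const_eq_sum_choose {m : ℕ}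
    (F : MultilinearMap R (fun _ : Fin m => M) N)
    (hF : ∀ (v : Fin m → M) (σ : Equiv.Perm (Fin m)), F (fun i => v (σ i)) = F v)
    (c : R) (x y : M) :
    F (fun _ => c • x + y) =
      ∑ k ∈ Finset.range (m + 1), m.choose k • c ^ k • F (fun i => if (i : ℕ) < k then x else y) := by
  classical
  simp_rw [map_smul_add_const, map_piecewise_const_eq_initial_segment F hF, ← powerset_univ]
  rw [sum_powerset_apply_card (fun k => c ^ k • F (fun i => if (i : ℕ) < k then x else y)),
    card_univ, Fintype.card_fin]

end MultilinearMap

namespace Polynomial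

variable {R : Type*} [CommRing R]

theorem coeff_linear_pow_self (b d : R) (n : ℕ) : ((C b * X + C d) ^ n).coeff n = b ^ n := by
  simpa using coeff_pow_of_natDegree_le (m := n) (natDegree_linear_le (a := b) (b := d))

theorem coeff_eq_of_forall_sum_eq_mul_linear_pow [IsDomain R] [Infinite R] {N n : ℕ}
    (hn : n ≤ N) (a : ℕ → R) (lam b d : R)
    (h : ∀ t, ∑ k ∈ Finset.range (N + 1), a k * t ^ k = lam * (b * t + d) ^ n) :
    a n = lam * b ^ n := by
  have hpoly : ∑ k ∈ Finset.range (N + 1), C (a k) * X ^ k = C lam * (C b * X + C d) ^ n :=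
    Polynomial.funext fun t => by simp [eval_finsetSum, h]
  have := congrArg (coeff · n) hpoly
  simpa [finsetSum_coeff, coeff_C_mul_X_pow, coeff_linear_pow_self, Nat.lt_succ_iff.mpr hn]
    using this

end Polynomial

theorem fujiki_isotropic_power_evaluation_general
    (H : Type*) [AddCommGroup H] [Module ℝ H]
    (B : H →ₗ[ℝ] H →ₗ[ℝ] ℝ) (hBsymm : ∀ x y : H, B x y = B y x)
    (lam : ℝ) (n : ℕ)
    (F : MultilinearMap ℝ (fun _ : Fin (2 * n) => H) ℝ)
    (hFsymm : ∀ (v : Fin (2 * n) → H) (σ : Equiv.Perm (Fin (2 * n))),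
      F (fun i => v (σ i)) = F v)
    (hF : ∀ η : H, F (fun _ => η) = lam * (B η η) ^ n)
    (η ξ : H) (hiso : B η η = 0) :
    F (fun i => if (i : ℕ) < n then η else ξ) =
      lam * ((2 : ℝ) ^ n * (n.factorial : ℝ) ^ 2 / ((2 * n).factorial : ℝ)) * (B η ξ) ^ n ∧
    (lam ≠ 0 → B η ξ ≠ 0 → F (fun i => if (i : ℕ) < n then η else ξ) ≠ 0) := by
  set c : ℕ → ℝ := fun k => F (fun i => if (i : ℕ) < k then η else ξ)
  have hquad (t : ℝ) : B (t • η + ξ) (t • η + ξ) = 2 * B η ξ * t + B ξ ξ := by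
    simp only [map_add, map_smul, LinearMap.add_apply, LinearMap.smul_apply, smul_eq_mul, hiso,
      hBsymm ξ η]
    ring
  have hexpand (t : ℝ) : ∑ k ∈ Finset.range (2 * n + 1), ((2 * n).choose k * c k) * t ^ k =
      lam * (2 * B η ξ * t + B ξ ξ) ^ n := by
    rw [← hquad, ← hF, F.map_smul_add_const_eq_sum_choose hFsymm]
    refine Finset.sum_congr rfl fun k _ => ?_
    simp only [nsmul_eq_mul, smul_eq_mul, c]
    ring
  have hcoeff : (2 * n).choose n * c n = lam * (2 * B η ξ) ^ n :=
    Polynomial.coeff_eq_of_forall_sum_eq_mul_linear_pow (by omega) _ lam _ _ hexpand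
  have hc : c n = lam * ((2 : ℝ) ^ n * (n.factorial : ℝ) ^ 2 / ((2 * n).factorial : ℝ)) *
      (B η ξ) ^ n := by
    rw [two_mul, Nat.cast_add_choose] at hcoeff
    rw [two_mul n]
    field_simp at hcoeff ⊢
    linear_combination hcoeff
  refine ⟨hc, fun hlam hB => ?_⟩
  change c n ≠ 0
  rw [hc]
  positivity

/-- Let `H` be a finite-dimensional real vector space, `B` a symmetric
bilinear form, `lam ∈ ℝ`, `n ≥ 1`, and `F` a symmetric `2n`-multilinear form with
`F(η,…,η) = lam * B(η,η)^n`. If `B(η,η) = 0` then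
`F(η,…,η,ξ,…,ξ) = lam * (2^n (n!)² / (2n)!) * B(η,ξ)^n` (with `n` copies of `η` and `n`
copies of `ξ`); in particular if `lam ≠ 0` and `B(η,ξ) ≠ 0` then `F(η,…,η,ξ,…,ξ) ≠ 0`. -/
theorem fujiki_isotropic_power_evaluation
    (H : Type*) [AddCommGroup H] [Module ℝ H] [FiniteDimensional ℝ H]
    (B : H →ₗ[ℝ] H →ₗ[ℝ] ℝ) (hBsymm : ∀ x y : H, B x y = B y x)
    (lam : ℝ) (n : ℕ) (hn : 1 ≤ n)
    (F : MultilinearMap ℝ (fun _ : Fin (2 * n) => H) ℝ)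
    (hFsymm : ∀ (v : Fin (2 * n) → H) (σ : Equiv.Perm (Fin (2 * n))),
      F (fun i => v (σ i)) = F v)
    (hF : ∀ η : H, F (fun _ => η) = lam * (B η η) ^ n)
    (η ξ : H) (hiso : B η η = 0) :
    F (fun i => if (i : ℕ) < n then η else ξ) =
      lam * ((2 : ℝ) ^ n * (n.factorial : ℝ) ^ 2 / ((2 * n).factorial : ℝ)) * (B η ξ) ^ n ∧
    (lam ≠ 0 → B η ξ ≠ 0 → F (fun i => if (i : ℕ) < n then η else ξ) ≠ 0) :=
  fujiki_isotropic_power_evaluation_general H B hBsymm lam n F hFsymm hF η ξ hiso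
end

section
/- Let V be a real vector space of dimension 4n, and Ω : V × V → ℂ an ℝ-bilinear alternating form such that for every nonzero v ∈ V there exists w ∈ V with Ω(v,w) ≠ 0 (non-degeneracy). Let Ω_ℂ denote the ℂ-bilinear alternating extension of Ω to the complexification V_ℂ = ℂ ⊗_ℝ V, and assume that the (n+1)-fold wedge power of Ω_ℂ vanishes: Ω_ℂ ∧ ⋯ ∧ Ω_ℂ (n+1 factors) = 0 as an alternating (2n+2)-form on V_ℂ. Then the subspace K = { w ∈ V_ℂ : Ω_ℂ(w, u) = 0 for all u ∈ V_ℂ } satisfies dim_ℂ K = 2n and K ∩ V = 0 (where V embeds in V_ℂ as v ↦ 1⊗v); consequently there is a unique ℝ-linear endomorphism J of V with J² = −Id whose ℂ-linear extension has K as its (−i)-eigenspace. -/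
open scoped TensorProduct

/-!
Write `K = ker Ω_ℂ` and `K̄` for its complex conjugate. A vector of `K ∩ K̄` has real and imaginary
parts in `K ∩ V`, which is `0` by non-degeneracy; so `K ∩ K̄ = 0` and `dim K ≤ 2n`. If `Ω_ℂ` had
rank `> 2n` it would admit `n + 1` hyperbolic pairs, and on them the antisymmetrised
`(n+1)`-st power of `Ω_ℂ` counts the permutations preserving the pairing, a positive number; so
`dim K = 2n` and `V_ℂ = K ⊕ K̄`. The endomorphism acting by `-i` on `K` and by `i` on `K̄` commutes
with conjugation, hence is the complexification of a real `J`. Any other such `J'` commutes with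
conjugation too, so it acts by `i` on `K̄` and agrees with `J` on `K ⊕ K̄`.
-/

section Pairing

open Equiv

variable {ι : Type*} [Fintype ι]

-- Gram matrix of the standard symplectic basis `(eᵢ, fᵢ) = ((i, 0), (i, 1))`.
def standardPairing [DecidableEq ι] (p q : ι × Fin 2) : ℤ :=
  if p.1 = q.1 then ((q.2 : ℕ) : ℤ) - (p.2 : ℕ) else 0

theorem Equiv.Perm.sign_fin_two (c : Perm (Fin 2)) :
    (sign c : ℤ) = ((c 1 : ℕ) : ℤ) - (c 0 : ℕ) := by
  decide +revert

theorem Equiv.Perm.exists_eq_prodCongr_of_fst_eq {σ : Perm (ι × Fin 2)}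
    (h : ∀ i, (σ (i, 0)).1 = (σ (i, 1)).1) :
    ∃ (π : Perm ι) (c : ι → Perm (Fin 2)),
      σ = (prodCongrRight c).trans (prodCongrLeft fun _ => π) := by
  have hfst : ∀ i j, (σ (i, j)).1 = (σ (i, 0)).1 := by
    intro i j
    fin_cases j
    exacts [rfl, (h i).symm]
  have hπ : (fun i => (σ (i, 0)).1).Bijective := by
    refine Finite.injective_iff_bijective.mp (Finite.injective_iff_surjective.mpr fun a => ?_)
    obtain ⟨⟨i, j⟩, hij⟩ := σ.surjective (a, 0)
    exact ⟨i, by rw [← hfst i j, hij]⟩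
  have hc : ∀ i, (fun j => (σ (i, j)).2).Bijective := fun i =>
    Finite.injective_iff_bijective.mp fun j j' hjj' =>
      congrArg Prod.snd (σ.injective (Prod.ext (by rw [hfst, hfst i j']) hjj'))
  refine ⟨ofBijective _ hπ, fun i => ofBijective _ (hc i), ?_⟩
  ext ⟨i, j⟩ <;> simp [hfst]

theorem sign_mul_prod_standardPairing [DecidableEq ι] (σ : Perm (ι × Fin 2)) :
    (Perm.sign σ : ℤ) * ∏ i, standardPairing (σ (i, 0)) (σ (i, 1)) =
      if ∀ i, (σ (i, 0)).1 = (σ (i, 1)).1 then 1 else 0 := by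
  split_ifs with h
  · obtain ⟨π, c, rfl⟩ := σ.exists_eq_prodCongr_of_fst_eq h
    simp [standardPairing, Perm.sign_prodCongrLeft, Perm.sign_prodCongrRight, ← Perm.sign_fin_two,
      ← Finset.prod_mul_distrib, ← Units.val_mul]
  · obtain ⟨i, hi⟩ := not_forall.mp h
    rw [Finset.prod_eq_zero (Finset.mem_univ i) (by simp [standardPairing, hi]), mul_zero]

theorem sum_sign_mul_prod_standardPairing_pos [DecidableEq ι] :
    0 < ∑ σ : Perm (ι × Fin 2), (Perm.sign σ : ℤ) * ∏ i, standardPairing (σ (i, 0)) (σ (i, 1)) := by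
  simp_rw [sign_mul_prod_standardPairing, Finset.sum_boole]
  exact_mod_cast Finset.card_pos.2 ⟨1, by simp⟩

end Pairing

section FinPairs

open Equiv

def finPairsEquiv (n : ℕ) : Fin (n + 1) × Fin 2 ≃ Fin (2 * n + 2) :=
  finProdFinEquiv.trans (finCongr (by ring))

@[simp] lemma finPairsEquiv_apply_zero (n : ℕ) (i : Fin (n + 1)) :
    finPairsEquiv n (i, 0) = ⟨2 * i.1, by omega⟩ := by
  ext; simp [finPairsEquiv, mul_comm]

@[simp] lemma finPairsEquiv_apply_one (n : ℕ) (i : Fin (n + 1)) :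
    finPairsEquiv n (i, 1) = ⟨2 * i.1 + 1, by omega⟩ := by
  ext; simp [finPairsEquiv, mul_comm, add_comm]

/-- For `f a b = B (v a) (v b)` this is a nonzero multiple of `B^{∧(n+1)}(v)`. -/
def antisymmPairs {R : Type*} [CommRing R] (n : ℕ) (f : Fin (2 * n + 2) → Fin (2 * n + 2) → R) :
    R :=
  ∑ σ : Perm (Fin (2 * n + 2)), ((Perm.sign σ : ℤ) : R) *
    ∏ i : Fin (n + 1), f (σ ⟨2 * i.1, by omega⟩) (σ ⟨2 * i.1 + 1, by omega⟩)

theorem antisymmPairs_eq_sum_perm_prod {R : Type*} [CommRing R] (n : ℕ)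
    (f : Fin (2 * n + 2) → Fin (2 * n + 2) → R) :
    antisymmPairs n f = ∑ τ : Perm (Fin (n + 1) × Fin 2), ((Perm.sign τ : ℤ) : R) *
      ∏ i, f (finPairsEquiv n (τ (i, 0))) (finPairsEquiv n (τ (i, 1))) := by
  rw [antisymmPairs, ← (finPairsEquiv n).permCongr.sum_comp]
  simp [← finPairsEquiv_apply_zero, ← finPairsEquiv_apply_one, Perm.sign_permCongr]

end FinPairs

section Symplectic

open Equiv Module LinearMap

variable {K W : Type*} [Field K] [AddCommGroup W] [Module K W]

theorem finrank_le_finrank_ker_inf_ker_add_two [FiniteDimensional K W] (φ ψ : W →ₗ[K] K) :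
    finrank K W ≤ finrank K ↥(ker φ ⊓ ker ψ) + 2 := by
  have hrange : finrank K (range (φ.prod ψ)) ≤ 2 := by
    simpa using Submodule.finrank_le (range (φ.prod ψ))
  have := finrank_range_add_finrank_ker (φ.prod ψ)
  rw [ker_prod] at this
  omega

theorem LinearMap.IsAlt.eq_zero_of_forall_mem_inf_ker {B : W →ₗ[K] W →ₗ[K] K} (hB : B.IsAlt)
    {e f u : W} (hef : B e f = 1) (hu : u ∈ ker (B e) ⊓ ker (B f))
    (h : ∀ x ∈ ker (B e) ⊓ ker (B f), B u x = 0) : B u = 0 := by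
  ext x
  have hue : B u e = 0 := (hB.eq_iff).mp (Submodule.mem_inf.mp hu).1
  have huf : B u f = 0 := (hB.eq_iff).mp (Submodule.mem_inf.mp hu).2
  have hproj : x - B e x • f + B f x • e ∈ ker (B e) ⊓ ker (B f) := by
    simp [hef, hB.self_eq_zero, ← hB.neg e f]
  have := h _ hproj
  simp only [map_add, map_sub, map_smul, smul_eq_mul, hue, huf] at this
  simpa using this

theorem LinearMap.IsAlt.exists_apply_eq_standardPairing [FiniteDimensional K W]
    {B : W →ₗ[K] W →ₗ[K] K} (hB : B.IsAlt) (m : ℕ) (h : finrank K (ker B) + 2 * m ≤ finrank K W + 1) :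
    ∃ w : Fin m × Fin 2 → W, ∀ p q, B (w p) (w q) = standardPairing p q := by
  induction m generalizing W with
  | zero => exact ⟨fun p => p.1.elim0, fun p => p.1.elim0⟩
  | succ m ih =>
    obtain ⟨e, f₀, hef₀⟩ : ∃ e f₀, B e f₀ ≠ 0 := by
      by_contra! hB0
      have : ker B = ⊤ := eq_top_iff.mpr fun e _ => LinearMap.ext (hB0 e)
      rw [this, finrank_top] at h
      omega
    set f := (B e f₀)⁻¹ • f₀
    have hef : B e f = 1 := by simp [f, hef₀]
    set U := ker (B e) ⊓ ker (B f)
    have hU : ∀ u ∈ U, ∀ j, B (![e, f] j) u = 0 := by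
      intro u hu j
      fin_cases j
      exacts [(Submodule.mem_inf.mp hu).1, (Submodule.mem_inf.mp hu).2]
    set B' := B.domRestrict₁₂ U U
    have hker : finrank K (ker B') ≤ finrank K (ker B) := by
      rw [← Submodule.finrank_map_subtype_eq]
      refine Submodule.finrank_mono fun x hx => ?_
      obtain ⟨u, hu, rfl⟩ := Submodule.mem_map.mp hx
      exact hB.eq_zero_of_forall_mem_inf_ker hef u.2 fun x hx =>
        congrArg (· ⟨x, hx⟩) (mem_ker.mp hu)
    have hrank : finrank K W ≤ finrank K U + 2 := finrank_le_finrank_ker_inf_ker_add_two _ _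
    obtain ⟨w, hw⟩ := ih (B := B') (fun u => hB.self_eq_zero u) (by omega)
    refine ⟨fun p => (Fin.cons (![e, f] p.2) (fun i => (w (i, p.2) : W)) : Fin (m + 1) → W) p.1, ?_⟩
    rintro ⟨i, j⟩ ⟨i', j'⟩
    refine Fin.cases ?_ (fun i => ?_) i <;> refine Fin.cases ?_ (fun i' => ?_) i'
    · fin_cases j <;> fin_cases j' <;> simp [standardPairing, hef, hB.self_eq_zero, ← hB.neg e f]
    · simp [standardPairing, hU _ (w _).2, (Fin.succ_ne_zero _).symm]
    · simp [standardPairing, (hB.eq_iff).mp (hU _ (w _).2 _), Fin.succ_ne_zero]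
    · simpa [standardPairing, B', domRestrict₁₂_apply] using hw (i, j) (i', j')

theorem LinearMap.IsAlt.finrank_le_finrank_ker_add_of_antisymmPairs_eq_zero [CharZero K]
    [FiniteDimensional K W] {B : W →ₗ[K] W →ₗ[K] K} (hB : B.IsAlt) (n : ℕ)
    (h : ∀ v : Fin (2 * n + 2) → W, antisymmPairs n (fun a b => B (v a) (v b)) = 0) :
    finrank K W ≤ finrank K (ker B) + 2 * n := by
  by_contra! hlt
  obtain ⟨w, hw⟩ := hB.exists_apply_eq_standardPairing (n + 1) (by omega)
  have := h (w ∘ (finPairsEquiv n).symm)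
  simp only [antisymmPairs_eq_sum_perm_prod, Function.comp_apply, symm_apply_apply, hw] at this
  exact (sum_sign_mul_prod_standardPairing_pos (ι := Fin (n + 1))).ne' (by exact_mod_cast this)

end Symplectic

section Complexification

open scoped ComplexConjugate
open Module LinearMap

variable {V : Type*} [AddCommGroup V] [Module ℝ V]

noncomputable def tensorConj : ℂ ⊗[ℝ] V →ₗ[ℝ] ℂ ⊗[ℝ] V := Complex.conjAe.toLinearMap.rTensor V

noncomputable def tensorRe : ℂ ⊗[ℝ] V →ₗ[ℝ] V := TensorProduct.lid ℝ V ∘ₗ Complex.reLm.rTensor V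

@[simp] lemma tensorConj_tmul (c : ℂ) (v : V) : tensorConj (c ⊗ₜ[ℝ] v) = conj c ⊗ₜ v := rfl

@[simp] lemma tensorRe_tmul (c : ℂ) (v : V) : tensorRe (c ⊗ₜ[ℝ] v) = c.re • v := rfl

@[simp] lemma tensorConj_tensorConj (x : ℂ ⊗[ℝ] V) : tensorConj (tensorConj x) = x := by
  induction x using TensorProduct.induction_on <;> simp_all

@[simp] lemma tensorConj_smul (z : ℂ) (x : ℂ ⊗[ℝ] V) :
    tensorConj (z • x) = conj z • tensorConj x := by
  induction x using TensorProduct.induction_on with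
  | zero => simp
  | tmul c v => simp [TensorProduct.smul_tmul']
  | add x y hx hy => simp [hx, hy]

lemma tensorConj_baseChange (f : V →ₗ[ℝ] V) (x : ℂ ⊗[ℝ] V) :
    tensorConj (f.baseChange ℂ x) = f.baseChange ℂ (tensorConj x) := by
  induction x using TensorProduct.induction_on <;> simp_all

lemma add_tensorConj (x : ℂ ⊗[ℝ] V) : x + tensorConj x = (2 : ℂ) • (1 ⊗ₜ tensorRe x) := by
  induction x using TensorProduct.induction_on with
  | zero => simp
  | tmul c v =>
    rw [tensorConj_tmul, ← TensorProduct.add_tmul, tensorRe_tmul, TensorProduct.tmul_smul,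
      TensorProduct.smul_tmul', TensorProduct.smul_tmul']
    congr 1
    apply Complex.ext <;> simp [Complex.add_re]; ring
  | add x y hx hy =>
    rw [map_add, map_add, TensorProduct.tmul_add, smul_add, ← hx, ← hy]
    abel

lemma one_tmul_tensorRe_of_tensorConj_eq {x : ℂ ⊗[ℝ] V} (hx : tensorConj x = x) :
    1 ⊗ₜ tensorRe x = x := by
  have := add_tensorConj x
  rw [hx, ← two_smul ℂ x] at this
  exact (smul_right_injective _ two_ne_zero this).symm

lemma baseChange_injective : Function.Injective (fun J : Module.End ℝ V => J.baseChange ℂ) := by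
  intro J₁ J₂ h
  ext v
  simpa using congrArg tensorRe (LinearMap.congr_fun h (1 ⊗ₜ v))

lemma exists_baseChange_eq_of_commute_tensorConj (T : Module.End ℂ (ℂ ⊗[ℝ] V))
    (hT : ∀ x, tensorConj (T x) = T (tensorConj x)) : ∃ J : Module.End ℝ V, J.baseChange ℂ = T := by
  refine ⟨tensorRe ∘ₗ T.restrictScalars ℝ ∘ₗ TensorProduct.mk ℝ ℂ V 1, ?_⟩
  ext v
  simpa using one_tmul_tensorRe_of_tensorConj_eq (by rw [hT]; simp)

def conjSubmodule (K : Submodule ℂ (ℂ ⊗[ℝ] V)) : Submodule ℂ (ℂ ⊗[ℝ] V) where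
  carrier := {x | tensorConj x ∈ K}
  add_mem' hx hy := by simpa using K.add_mem hx hy
  zero_mem' := by simp
  smul_mem' z x hx := by simpa using K.smul_mem (conj z) hx

@[simp] lemma mem_conjSubmodule {K : Submodule ℂ (ℂ ⊗[ℝ] V)} {x : ℂ ⊗[ℝ] V} :
    x ∈ conjSubmodule K ↔ tensorConj x ∈ K := Iff.rfl

lemma finrank_conjSubmodule (K : Submodule ℂ (ℂ ⊗[ℝ] V)) :
    finrank ℂ (conjSubmodule K) = finrank ℂ K := by
  let e : conjSubmodule K ≃ₗ[ℝ] K :=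
    { toFun x := ⟨tensorConj x, x.2⟩
      invFun x := ⟨tensorConj x, by simp⟩
      map_add' x y := by ext; simp
      map_smul' r x := by ext; simp
      left_inv x := by ext; simp
      right_inv x := by ext; simp }
  have := e.finrank_eq
  rw [← finrank_mul_finrank ℝ ℂ (conjSubmodule K), ← finrank_mul_finrank ℝ ℂ K,
    Complex.finrank_real_complex] at this
  omega

lemma disjoint_conjSubmodule {K : Submodule ℂ (ℂ ⊗[ℝ] V)}
    (hK : ∀ v : V, (1 : ℂ) ⊗ₜ[ℝ] v ∈ K → v = 0) : Disjoint K (conjSubmodule K) := by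
  have hreal : ∀ x ∈ K, tensorConj x ∈ K → x + tensorConj x = 0 := fun x hx hx' => by
    have hsum := K.add_mem hx hx'
    rw [add_tensorConj, K.smul_mem_iff two_ne_zero] at hsum
    rw [add_tensorConj, hK _ hsum, TensorProduct.tmul_zero, smul_zero]
  rw [Submodule.disjoint_def]
  intro x hx hx'
  have h₁ := hreal x hx hx'
  have h₂ := hreal (Complex.I • x) (K.smul_mem _ hx) (by simpa using K.smul_mem _ hx')
  simp only [tensorConj_smul, Complex.conj_I, neg_smul, ← sub_eq_add_neg, ← smul_sub] at h₂
  have h₃ := (smul_eq_zero.mp h₂).resolve_left Complex.I_ne_zero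
  have h₄ : (2 : ℂ) • x = 0 := by
    rw [two_smul, ← h₁, ← sub_eq_zero.mp h₃]
  exact (smul_eq_zero.mp h₄).resolve_left two_ne_zero

lemma apply_eq_I_smul_of_mem_conjSubmodule {K : Submodule ℂ (ℂ ⊗[ℝ] V)}
    {T : Module.End ℂ (ℂ ⊗[ℝ] V)} (hT : ∀ x, tensorConj (T x) = T (tensorConj x))
    (hTK : ∀ x ∈ K, T x = -Complex.I • x) {x : ℂ ⊗[ℝ] V} (hx : x ∈ conjSubmodule K) :
    T x = Complex.I • x := by
  simpa [hT] using congrArg tensorConj (hTK _ hx)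

section ComplexStructure

variable {K : Submodule ℂ (ℂ ⊗[ℝ] V)} (hK : IsCompl K (conjSubmodule K))
include hK

lemma eigenspace_eq_of_isCompl {T : Module.End ℂ (ℂ ⊗[ℝ] V)}
    (hTK : ∀ x ∈ K, T x = -Complex.I • x) (hTK' : ∀ x ∈ conjSubmodule K, T x = Complex.I • x) :
    Module.End.eigenspace T (-Complex.I) = K := by
  refine le_antisymm (fun x hx => ?_) fun x hx => Module.End.mem_eigenspace_iff.mpr (hTK x hx)
  obtain ⟨⟨k, hk⟩, ⟨k', hk'⟩, rfl, -⟩ := Submodule.existsUnique_add_of_isCompl hK x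
  rw [Module.End.mem_eigenspace_iff, map_add, hTK k hk, hTK' k' hk', smul_add, add_right_inj,
    ← sub_eq_zero, ← sub_smul, smul_eq_zero] at hx
  obtain h | rfl := hx
  · simp [Complex.ext_iff] at h
  · simpa using hk

lemma existsUnique_complexStructure_of_isCompl :
    ∃! J : Module.End ℝ V, J * J = -1 ∧
      Module.End.eigenspace (J.baseChange ℂ) (-Complex.I) = K := by
  set T := LinearMap.ofIsCompl hK (-Complex.I • K.subtype) (Complex.I • (conjSubmodule K).subtype)
  have hTK : ∀ x ∈ K, T x = -Complex.I • x := fun x hx => ofIsCompl_apply_left hK ⟨x, hx⟩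
  have hTK' : ∀ x ∈ conjSubmodule K, T x = Complex.I • x := fun x hx =>
    ofIsCompl_apply_right hK ⟨x, hx⟩
  have hT : ∀ x, tensorConj (T x) = T (tensorConj x) := by
    intro x
    obtain ⟨⟨k, hk⟩, ⟨k', hk'⟩, rfl, -⟩ := Submodule.existsUnique_add_of_isCompl hK x
    have hk₁ : tensorConj k ∈ conjSubmodule K := by simpa using hk
    simp [hTK k hk, hTK' k' hk', hTK _ hk', hTK' _ hk₁]
  have hTT : T * T = -1 := by
    refine ext_on_codisjoint hK.codisjoint (fun x hx => ?_) fun x hx => ?_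
    · simp [hTK x hx, hTK _ (K.smul_mem _ hx), smul_smul]
    · simp [hTK' x hx, hTK' _ ((conjSubmodule K).smul_mem _ hx), smul_smul]
  obtain ⟨J, hJ⟩ := exists_baseChange_eq_of_commute_tensorConj T hT
  refine ⟨J, ⟨baseChange_injective ?_, hJ ▸ eigenspace_eq_of_isCompl hK hTK hTK'⟩, ?_⟩
  · simp [baseChange_mul, baseChange_neg, hJ, hTT]
  · rintro J' ⟨-, hJ'⟩
    have hJ'K : ∀ x ∈ K, J'.baseChange ℂ x = -Complex.I • x := fun x hx =>
      Module.End.mem_eigenspace_iff.mp (hJ' ▸ hx)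
    have hJ'T : J'.baseChange ℂ = T :=
      ext_on_codisjoint hK.codisjoint (fun x hx => (hJ'K x hx).trans (hTK x hx).symm) fun x hx =>
        (apply_eq_I_smul_of_mem_conjSubmodule (tensorConj_baseChange J') hJ'K hx).trans
          (hTK' x hx).symm
    exact baseChange_injective (hJ'T.trans hJ.symm)

end ComplexStructure

lemma isAlt_of_apply_one_tmul_self {B : ℂ ⊗[ℝ] V →ₗ[ℂ] ℂ ⊗[ℝ] V →ₗ[ℂ] ℂ}
    (h : ∀ v : V, B (1 ⊗ₜ v) (1 ⊗ₜ v) = 0) : B.IsAlt := by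
  have hskew : B = -B.flip := by
    ext v w
    have := h (v + w)
    simp only [TensorProduct.tmul_add, map_add, LinearMap.add_apply, h, zero_add, add_zero] at this
    simpa using eq_neg_of_add_eq_zero_right this
  intro x
  exact self_eq_neg.mp (congrArg (fun B => B x x) hskew)

end Complexification

/-- pointwise content of Theorem 3.6. Let `V` be a real vector space of
dimension `4n` and `Ω` an ℝ-bilinear alternating ℂ-valued form on `V`, non-degenerate in the
sense that every nonzero `v ∈ V` pairs nontrivially with some `w`. Let `ΩC` be the ℂ-bilinear
extension of `Ω` to `ℂ ⊗[ℝ] V` (characterized by its values on real vectors), and suppose the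
`(n+1)`-fold wedge power of `ΩC` vanishes (expressed via full antisymmetrization, a nonzero
multiple of the wedge power). Then `K = ker ΩC` satisfies `dim_ℂ K = 2n` and `K ∩ V = 0`, and
there is a unique ℝ-linear `J` with `J² = -Id` whose ℂ-linear extension has `K` as its
`(-i)`-eigenspace. -/
theorem degenerate_form_gives_complex_structure
    (n : ℕ) (V : Type*) [AddCommGroup V] [Module ℝ V] [FiniteDimensional ℝ V]
    (hdim : Module.finrank ℝ V = 4 * n)
    (Ω : V →ₗ[ℝ] V →ₗ[ℝ] ℂ) (hΩalt : ∀ v : V, Ω v v = 0)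
    (hΩnd : ∀ v : V, v ≠ 0 → ∃ w : V, Ω v w ≠ 0)
    (ΩC : (ℂ ⊗[ℝ] V) →ₗ[ℂ] (ℂ ⊗[ℝ] V) →ₗ[ℂ] ℂ)
    (hΩC : ∀ v w : V, ΩC ((1 : ℂ) ⊗ₜ[ℝ] v) ((1 : ℂ) ⊗ₜ[ℝ] w) = Ω v w)
    (hpow : ∀ v : Fin (2 * n + 2) → (ℂ ⊗[ℝ] V),
        (∑ σ : Equiv.Perm (Fin (2 * n + 2)), ((Equiv.Perm.sign σ : ℤ) : ℂ) *
          ∏ i : Fin (n + 1),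
            ΩC (v (σ ⟨2 * i.1, by have := i.2; omega⟩))
              (v (σ ⟨2 * i.1 + 1, by have := i.2; omega⟩))) = 0) :
    Module.finrank ℂ (LinearMap.ker ΩC) = 2 * n ∧
    (∀ v : V, (1 : ℂ) ⊗ₜ[ℝ] v ∈ LinearMap.ker ΩC → v = 0) ∧
    (∃! J : Module.End ℝ V, J * J = -1 ∧
      Module.End.eigenspace (LinearMap.baseChange ℂ (J : V →ₗ[ℝ] V)) (-Complex.I) =
        LinearMap.ker ΩC) := by
  have hreal : ∀ v : V, (1 : ℂ) ⊗ₜ[ℝ] v ∈ LinearMap.ker ΩC → v = 0 := fun v hv => by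
    by_contra hv0
    obtain ⟨w, hw⟩ := hΩnd v hv0
    exact hw (by rw [← hΩC, LinearMap.mem_ker.mp hv, LinearMap.zero_apply])
  have hdisj := disjoint_conjSubmodule hreal
  have hupper := Submodule.finrank_add_finrank_le_of_disjoint hdisj
  have hlower := (isAlt_of_apply_one_tmul_self fun v => (hΩC v v).trans (hΩalt v))
    |>.finrank_le_finrank_ker_add_of_antisymmPairs_eq_zero n hpow
  rw [finrank_conjSubmodule, Module.finrank_baseChange, hdim] at hupper
  rw [Module.finrank_baseChange, hdim] at hlower
  have hcompl : IsCompl (LinearMap.ker ΩC) (conjSubmodule (LinearMap.ker ΩC)) :=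
    (Submodule.isCompl_iff_disjoint _ _ (by
      rw [finrank_conjSubmodule, Module.finrank_baseChange, hdim]; omega)).mpr hdisj
  exact ⟨by omega, hreal, existsUnique_complexStructure_of_isCompl hcompl⟩
end

section
/- Let H be a finite-dimensional real vector space with a symmetric bilinear form q, and let V ⊂ H be a 2-dimensional subspace on which q is positive definite. Let q_ℂ be the ℂ-bilinear extension of q to the complexification H_ℂ and V_ℂ ⊂ H_ℂ the complexification of V. Then the set of complex lines l ⊂ V_ℂ that are isotropic, i.e. satisfy q_ℂ(x,x) = 0 for all x ∈ l, has exactly two elements. -/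
/-!
Choose a `q`-orthonormal basis `e, f` of `V`. Then `V_ℂ` is spanned by `e, f`, and on
`a e + b f` the complexified form takes the value `a² + b² = (b - i a)(b + i a)`. Its zero set is
therefore the union of the two distinct lines spanned by `e + i f` and `e - i f`.
-/

open scoped TensorProduct
open Module Submodule

namespace LinearMap

variable {K M : Type*} [Field K] [AddCommGroup M] [Module K M]

structure IsOrthonormalPair (B : M →ₗ[K] M →ₗ[K] K) (E F : M) : Prop where
  apply_fst_fst : B E E = 1
  apply_snd_snd : B F F = 1
  apply_fst_snd : B E F = 0
  apply_snd_fst : B F E = 0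

def isotropicLines (B : M →ₗ[K] M →ₗ[K] K) (S : Submodule K M) : Set (Submodule K M) :=
  {W | W ≤ S ∧ finrank K W = 1 ∧ ∀ x ∈ W, B x x = 0}

theorem apply_self_eq_zero_of_mem_span_singleton {B : M →ₗ[K] M →ₗ[K] K} {v x : M}
    (hv : B v v = 0) (hx : x ∈ K ∙ v) : B x x = 0 := by
  obtain ⟨c, rfl⟩ := mem_span_singleton.mp hx
  simp [hv]

namespace IsOrthonormalPair

variable {B : M →ₗ[K] M →ₗ[K] K} {E F : M}

theorem apply_smul_add_smul_self (h : B.IsOrthonormalPair E F) (a b : K) :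
    B (a • E + b • F) (a • E + b • F) = a * a + b * b := by
  simp only [map_add, map_smul, add_apply, smul_apply, smul_eq_mul, h.apply_fst_fst,
    h.apply_snd_snd, h.apply_fst_snd, h.apply_snd_fst]
  ring

theorem span_singleton_add_smul_mem_isotropicLines (h : B.IsOrthonormalPair E F) {j : K}
    (hj : j * j = -1) : K ∙ (E + j • F) ∈ isotropicLines B (span K {E, F}) := by
  have hE : B (E + j • F) E = 1 := by simp [h.apply_fst_fst, h.apply_snd_fst]
  have hne : E + j • F ≠ 0 := fun h0 => by simp [h0] at hE
  refine ⟨(span_singleton_le_iff_mem _ _).mpr (mem_span_pair.mpr ⟨1, j, by rw [one_smul]⟩),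
    finrank_span_singleton hne, fun x hx => apply_self_eq_zero_of_mem_span_singleton ?_ hx⟩
  simpa [hj] using h.apply_smul_add_smul_self 1 j

theorem span_singleton_sub_smul_mem_isotropicLines (h : B.IsOrthonormalPair E F) {i : K}
    (hi : i * i = -1) : K ∙ (E - i • F) ∈ isotropicLines B (span K {E, F}) := by
  simpa [sub_eq_add_neg] using
    h.span_singleton_add_smul_mem_isotropicLines (j := -i) (by rw [neg_mul_neg, hi])

theorem mem_span_add_smul_or_mem_span_sub_smul (h : B.IsOrthonormalPair E F) {i : K}
    (hi : i * i = -1) {x : M} (hx : x ∈ span K {E, F}) (hxx : B x x = 0) :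
    x ∈ K ∙ (E + i • F) ∨ x ∈ K ∙ (E - i • F) := by
  obtain ⟨a, b, rfl⟩ := mem_span_pair.mp hx
  rw [h.apply_smul_add_smul_self] at hxx
  have : (b - i * a) * (b + i * a) = 0 := by linear_combination hxx - a * a * hi
  rcases mul_eq_zero.mp this with hb | hb
  · exact .inl (mem_span_singleton.mpr ⟨a, by rw [sub_eq_zero.mp hb]; module⟩)
  · exact .inr (mem_span_singleton.mpr ⟨a, by rw [eq_neg_of_add_eq_zero_left hb]; module⟩)

theorem span_singleton_add_smul_ne_span_singleton_sub_smul (h : B.IsOrthonormalPair E F)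
    {i : K} (hi : i * i = -1) (h2 : (2 : K) ≠ 0) : K ∙ (E + i • F) ≠ K ∙ (E - i • F) := by
  intro heq
  -- both lines would contain `(E + i F) + (E - i F) = 2 E`, which is not isotropic
  have hE : (2 : K) • E ∈ K ∙ (E - i • F) := by
    convert add_mem (heq ▸ mem_span_singleton_self (E + i • F)) (mem_span_singleton_self _)
      using 1
    module
  simpa [h.apply_fst_fst, h2] using (h.span_singleton_sub_smul_mem_isotropicLines hi).2.2 _ hE

theorem isotropicLines_span_pair (h : B.IsOrthonormalPair E F) {i : K} (hi : i * i = -1) :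
    isotropicLines B (span K {E, F}) = {K ∙ (E + i • F), K ∙ (E - i • F)} := by
  have hplus := h.span_singleton_add_smul_mem_isotropicLines hi
  have hminus := h.span_singleton_sub_smul_mem_isotropicLines hi
  ext W
  refine ⟨fun ⟨hWS, hW1, hWiso⟩ => ?_, by rintro (rfl | rfl) <;> assumption⟩
  obtain ⟨x, hxW, hx0⟩ := W.exists_mem_ne_zero_of_ne_bot (by rintro rfl; simp at hW1)
  rw [eq_span_singleton_of_mem_of_finrank_eq_one hW1 hxW hx0]
  rcases h.mem_span_add_smul_or_mem_span_sub_smul hi (hWS hxW) (hWiso x hxW) with hx | hx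
  · exact .inl (eq_span_singleton_of_mem_of_finrank_eq_one hplus.2.1 hx hx0).symm
  · exact .inr (eq_span_singleton_of_mem_of_finrank_eq_one hminus.2.1 hx hx0).symm

end IsOrthonormalPair

end LinearMap

theorem LinearMap.BilinForm.exists_orthonormal_basis_of_pos {V : Type*} [AddCommGroup V]
    [Module ℝ V] [FiniteDimensional ℝ V] {B : LinearMap.BilinForm ℝ V} (hB : LinearMap.IsSymm B)
    (hpos : ∀ v, v ≠ 0 → 0 < B v v) {n : ℕ} (hn : finrank ℝ V = n) :
    ∃ b : Basis (Fin n) ℝ V, B.IsOrthoᵢ b ∧ ∀ i, B (b i) (b i) = 1 := by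
  subst hn
  obtain ⟨v, hv⟩ := exists_orthogonal_basis hB
  have hvpos : ∀ i, 0 < B (v i) (v i) := fun i => hpos _ (v.ne_zero i)
  let c i : ℝˣ := Units.mk0 (√(B (v i) (v i)))⁻¹ (by have := hvpos i; positivity)
  refine ⟨v.unitsSMul c, fun i j hij => ?_, fun i => ?_⟩
  · show B _ _ = 0
    simp only [Basis.unitsSMul_apply, Units.smul_def, map_smul, LinearMap.smul_apply,
      smul_eq_mul]
    rw [show B (v i) (v j) = 0 from hv hij, mul_zero, mul_zero]
  · have := hvpos i
    simp only [Basis.unitsSMul_apply, Units.smul_def, map_smul, LinearMap.smul_apply,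
      smul_eq_mul, c, Units.val_mk0]
    field_simp
    rw [Real.sq_sqrt this.le]

theorem Submodule.exists_isOrthonormalPair_span_eq {H : Type*} [AddCommGroup H] [Module ℝ H]
    {q : H →ₗ[ℝ] H →ₗ[ℝ] ℝ} (hq : ∀ x y, q x y = q y x) {V : Submodule ℝ H}
    (hV : finrank ℝ V = 2) (hpos : ∀ v ∈ V, v ≠ 0 → 0 < q v v) :
    ∃ e f : H, q.IsOrthonormalPair e f ∧ span ℝ {e, f} = V := by
  have : FiniteDimensional ℝ V := finite_of_finrank_pos (by omega)
  obtain ⟨b, hortho, hnorm⟩ := (LinearMap.BilinForm.restrict q V).exists_orthonormal_basis_of_pos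
    (LinearMap.isSymm_def.mpr fun x y => hq x y) (fun v hv => hpos v v.2 (by simpa using hv)) hV
  refine ⟨b 0, b 1, ⟨hnorm 0, hnorm 1, hortho (by simp), hortho (by simp)⟩, ?_⟩
  have hrange : {(b 0 : H), (b 1 : H)} = V.subtype '' Set.range b := by
    ext; simp [Fin.exists_fin_two, eq_comm]
  rw [hrange, ← map_span, b.span_eq, map_subtype_top]

theorem positive_plane_has_two_isotropic_lines_general
    (H : Type*) [AddCommGroup H] [Module ℝ H]
    (q : H →ₗ[ℝ] H →ₗ[ℝ] ℝ) (hqsymm : ∀ x y : H, q x y = q y x)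
    (qC : (ℂ ⊗[ℝ] H) →ₗ[ℂ] (ℂ ⊗[ℝ] H) →ₗ[ℂ] ℂ)
    (hqC : ∀ a b : H, qC ((1 : ℂ) ⊗ₜ[ℝ] a) ((1 : ℂ) ⊗ₜ[ℝ] b) = q a b)
    (V : Submodule ℝ H) (hV : Module.finrank ℝ V = 2)
    (hpos : ∀ v ∈ V, v ≠ 0 → 0 < q v v) :
    ∃ W₁ W₂ : Submodule ℂ (ℂ ⊗[ℝ] H), W₁ ≠ W₂ ∧
      {W : Submodule ℂ (ℂ ⊗[ℝ] H) |
          W ≤ Submodule.span ℂ ((fun v : H => (1 : ℂ) ⊗ₜ[ℝ] v) '' (V : Set H)) ∧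
          Module.finrank ℂ W = 1 ∧ ∀ x ∈ W, qC x x = 0}
        = {W₁, W₂} := by
  obtain ⟨e, f, h, rfl⟩ := exists_isOrthonormalPair_span_eq hqsymm hV hpos
  have hC : qC.IsOrthonormalPair (1 ⊗ₜ e) (1 ⊗ₜ f) :=
    ⟨by simp [hqC, h.apply_fst_fst], by simp [hqC, h.apply_snd_snd],
      by simp [hqC, h.apply_fst_snd], by simp [hqC, h.apply_snd_fst]⟩
  have hspan : span ℂ ((fun v : H => (1 : ℂ) ⊗ₜ[ℝ] v) '' (span ℝ {e, f} : Set H)) =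
      span ℂ {(1 : ℂ) ⊗ₜ[ℝ] e, (1 : ℂ) ⊗ₜ[ℝ] f} := by
    have := baseChange_span (R := ℝ) ℂ ({e, f} : Set H)
    rwa [baseChange_eq_span, map_coe, Set.image_pair] at this
  refine ⟨_, _, hC.span_singleton_add_smul_ne_span_singleton_sub_smul Complex.I_mul_I
    two_ne_zero, ?_⟩
  rw [hspan]
  exact hC.isotropicLines_span_pair Complex.I_mul_I

/-- converse direction in Remark 1.5. Let `H` be a finite-dimensional real
vector space with a symmetric bilinear form `q`, and `V ⊂ H` a 2-dimensional subspace on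
which `q` is positive definite. Let `qC` be the ℂ-bilinear extension of `q` to `ℂ ⊗[ℝ] H`
and `V_ℂ` the complexification of `V`. Then the set of isotropic complex lines `l ⊂ V_ℂ`
has exactly two elements. -/
theorem positive_plane_has_two_isotropic_lines
    (H : Type*) [AddCommGroup H] [Module ℝ H] [FiniteDimensional ℝ H]
    (q : H →ₗ[ℝ] H →ₗ[ℝ] ℝ) (hqsymm : ∀ x y : H, q x y = q y x)
    (qC : (ℂ ⊗[ℝ] H) →ₗ[ℂ] (ℂ ⊗[ℝ] H) →ₗ[ℂ] ℂ)
    (hqC : ∀ a b : H, qC ((1 : ℂ) ⊗ₜ[ℝ] a) ((1 : ℂ) ⊗ₜ[ℝ] b) = q a b)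
    (V : Submodule ℝ H) (hV : Module.finrank ℝ V = 2)
    (hpos : ∀ v ∈ V, v ≠ 0 → 0 < q v v) :
    ∃ W₁ W₂ : Submodule ℂ (ℂ ⊗[ℝ] H), W₁ ≠ W₂ ∧
      {W : Submodule ℂ (ℂ ⊗[ℝ] H) |
          W ≤ Submodule.span ℂ ((fun v : H => (1 : ℂ) ⊗ₜ[ℝ] v) '' (V : Set H)) ∧
          Module.finrank ℂ W = 1 ∧ ∀ x ∈ W, qC x x = 0}
        = {W₁, W₂} :=
  positive_plane_has_two_isotropic_lines_general H q hqsymm qC hqC V hV hpos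
end

section
/- Let (V, g) be a real inner product space with ℝ-linear endomorphisms I, J, K preserving g and satisfying I² = J² = K² = −Id and IJ = K, and let Ω(x,y) = g(x,Jy) + i·g(x,Ky) be the associated ℂ-valued 2-form. Let η : V × V → ℝ be any alternating ℝ-bilinear form and t ∈ ℂ. Then the ℂ-valued form Ω_t = Ω + t·η is non-degenerate: for every nonzero x ∈ V there exists y ∈ V with Ω_t(x,y) ≠ 0. -/
/-- non-degeneracy step in Theorem 3.12. Let `(V, g)` be a real inner
product space with `g`-preserving endomorphisms `I, J, K` satisfying `I² = J² = K² = -Id`,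
`IJ = K`, and let `Ω(x,y) = g(x,Jy) + i·g(x,Ky)`. Then for any alternating ℝ-bilinear form
`η` on `V` and any `t ∈ ℂ`, the form `Ω_t = Ω + t·η` is non-degenerate. -/
theorem omega_plus_t_eta_nondegenerate
    (V : Type*) [AddCommGroup V] [Module ℝ V]
    (g : V →ₗ[ℝ] V →ₗ[ℝ] ℝ) (hgsymm : ∀ x y : V, g x y = g y x)
    (hgpos : ∀ x : V, x ≠ 0 → 0 < g x x)
    (I J K : Module.End ℝ V)
    (hgI : ∀ x y : V, g (I x) (I y) = g x y)
    (hgJ : ∀ x y : V, g (J x) (J y) = g x y)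
    (hgK : ∀ x y : V, g (K x) (K y) = g x y)
    (hI : I * I = -1) (hJ : J * J = -1) (hK : K * K = -1) (hIJ : I * J = K)
    (Ω : V → V → ℂ)
    (hΩ : Ω = fun x y => (g x (J y) : ℂ) + Complex.I * (g x (K y) : ℂ))
    (η : V →ₗ[ℝ] V →ₗ[ℝ] ℝ) (hη : ∀ x : V, η x x = 0)
    (t : ℂ) :
    ∀ x : V, x ≠ 0 → ∃ y : V, Ω x y + t * (η x y : ℂ) ≠ 0 := by

  intro x hx
  by_contra hcon
  push_neg at hcon
  have hJJ : ∀ v : V, J (J v) = -v := by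
    intro v
    have := congrArg (fun (f : Module.End ℝ V) => f v) hJ
    simpa [Module.End.mul_apply] using this
  have hKJmul : K * J = -I := by
    rw [← hIJ, mul_assoc, hJ]; simp
  have hKJ : ∀ v : V, K (J v) = -(I v) := by
    intro v
    have := congrArg (fun (f : Module.End ℝ V) => f v) hKJmul
    simpa [Module.End.mul_apply] using this
  have hJKmul : J * K = I := by
    have h1 : I * (I * J * (I * J)) = I * (-1) := by rw [hIJ, hK]
    have h2 : -(J * (I * J)) = -I := by
      calc -(J * (I * J)) = (-1 : Module.End ℝ V) * (J * (I * J)) := by noncomm_ring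
        _ = (I * I) * (J * (I * J)) := by rw [hI]
        _ = I * (I * J * (I * J)) := by noncomm_ring
        _ = I * (-1) := h1
        _ = -I := by noncomm_ring
    have h3 : J * (I * J) = I := neg_injective h2
    rw [← hIJ]; exact h3
  have hJK : ∀ v : V, J (K v) = I v := by
    intro v
    have := congrArg (fun (f : Module.End ℝ V) => f v) hJKmul
    simpa [Module.End.mul_apply] using this
  have hKK : ∀ v : V, K (K v) = -v := by
    intro v
    have := congrArg (fun (f : Module.End ℝ V) => f v) hK
    simpa [Module.End.mul_apply] using this
  have hgxI : g x (I x) = 0 := by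
    have h1 : g (I x) (I (I x)) = g x (I x) := hgI x (I x)
    have hII : I (I x) = -x := by
      have := congrArg (fun (f : Module.End ℝ V) => f x) hI
      simpa [Module.End.mul_apply] using this
    rw [hII] at h1
    have h2 : g (I x) (-x) = -(g (I x) x) := by simp
    rw [h2, hgsymm (I x) x] at h1
    linarith
  set c : ℝ := g x x with hc
  have hcpos : 0 < c := hgpos x hx
  have h1 := hcon (-(J x))
  have h2 := hcon (-(K x))
  rw [hΩ] at h1 h2
  simp only [map_neg, hJJ, hKJ, hJK, hKK, neg_neg] at h1 h2
  set a : ℝ := η x (J x) with ha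
  set b : ℝ := η x (K x) with hb
  have e1 : (c : ℂ) - t * a = 0 := by
    have hg0 : g x (-(I x)) = 0 := by simp [hgxI]
    rw [hgxI] at h1
    simpa [sub_eq_add_neg] using h1
  have e2 : Complex.I * (c : ℂ) - t * b = 0 := by
    rw [hgxI] at h2
    simpa [sub_eq_add_neg] using h2
  have hcne : (c : ℂ) ≠ 0 := by
    exact_mod_cast ne_of_gt hcpos
  have key : (a : ℂ) * Complex.I * c = (b : ℂ) * c := by
    linear_combination (a : ℂ) * e2 - (b : ℂ) * e1
  have key2 : (a : ℂ) * Complex.I = b := mul_right_cancel₀ hcne key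
  have ha0 : a = 0 := by
    have := congrArg Complex.im key2
    simpa using this
  have : (c : ℂ) = 0 := by
    rw [ha0] at e1; simpa using e1
  exact hcne this
end
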